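/- arXiv:1101.0823 — 4 statements merged into one kernel-verified Lean document; each statement's English description precedes it below -/
import Mathlib

section
/- Let n ≥ 4 and let A₁ ≥ A₂ ≥ … ≥ Aₙ > 0 be real numbers. Then there exist vectors v₁, …, vₙ in ℝ³ with ‖vᵢ‖ = Aᵢ for all i that are fully equilibrated in ℝ³ (i.e., they sum to zero, no two of them are positively proportional, and they span ℝ³) if and only if A₁ < A₂ + A₃ + … + Aₙ. -/
/-!
Necessity is the strict triangle inequality: `v₁ = -(v₂ + ⋯ + vₙ)`, and `v₂`, `v₃` do not lie on
a common ray.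

Sufficiency goes by induction on `n`, starting from a degenerate pair `u, -u`. Replace the last two
lengths `s, t` by one length `B` with `|s - t| < B < s + t` such that the shorter list still
satisfies the polygon inequality, realise it, and split the vector `w` of length `B` as `x + y`
with `x = γ • w + β • p`, where `p` is a unit vector orthogonal to `w` and `β > 0`. If the family
does not span yet, `p` is taken normal to its span: the span grows, and the sign of `⟪p, ·⟫`
separates `x`, `y` and the old vectors. Otherwise `p` ranges over a circle, and since `‖x‖`, `‖y‖`
do not depend on `p`, each old vector is positively proportional to `x` (or `y`) for at most one
`p`.
-/

def PosProportional {V : Type*} [AddCommGroup V] [Module ℝ V] (u v : V) : Prop :=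
  ∃ c : ℝ, 0 < c ∧ u = c • v

open Finset Fin Function Module Submodule RealInnerProductSpace

theorem Fin.pairwise_snoc_iff {α : Type*} {r : α → α → Prop} {n : ℕ} {f : Fin n → α} {a : α} :
    Pairwise (r on (snoc f a : Fin (n + 1) → α)) ↔
      Pairwise (r on f) ∧ ∀ i, r (f i) a ∧ r a (f i) := by
  refine ⟨fun h => ⟨fun i j hij => ?_, fun i => ⟨?_, ?_⟩⟩, fun ⟨hf, ha⟩ i j hij => ?_⟩
  · simpa [onFun] using h (castSucc_injective n |>.ne hij)
  · simpa [onFun] using h (castSucc_ne_last i)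
  · simpa [onFun] using h (castSucc_ne_last i).symm
  · induction i using lastCases <;> induction j using lastCases
    all_goals simp_all [onFun]
    exact hf hij

section PosProportional

variable {V : Type*} [AddCommGroup V] [Module ℝ V] {u v : V}

theorem PosProportional.symm (h : PosProportional u v) : PosProportional v u := by
  obtain ⟨c, hc, rfl⟩ := h
  exact ⟨c⁻¹, inv_pos.2 hc, by rw [smul_smul, inv_mul_cancel₀ hc.ne', one_smul]⟩

theorem posProportional_comm : PosProportional u v ↔ PosProportional v u :=
  ⟨.symm, .symm⟩

theorem PosProportional.sameRay (h : PosProportional u v) : SameRay ℝ u v := by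
  obtain ⟨c, hc, rfl⟩ := h
  exact SameRay.sameRay_pos_smul_left v hc

theorem SameRay.posProportional (h : SameRay ℝ u v) (hu : u ≠ 0) (hv : v ≠ 0) :
    PosProportional u v := by
  obtain ⟨r₁, r₂, hr₁, hr₂, h⟩ := h.exists_pos hu hv
  refine ⟨r₁⁻¹ * r₂, by positivity, ?_⟩
  rw [mul_smul, ← h, smul_smul, inv_mul_cancel₀ hr₁.ne', one_smul]

theorem not_posProportional_neg_self (hu : u ≠ 0) : ¬PosProportional u (-u) := by
  rintro ⟨c, hc, h⟩
  have : (1 + c) • u = 0 := by rw [add_smul, one_smul]; nth_rw 1 [h]; simp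
  exact hu ((smul_eq_zero.1 this).resolve_left (by linarith))

end PosProportional

section Equilibrated

variable {V : Type*} [AddCommGroup V] [Module ℝ V]

def IsEquilibrated {ι : Type*} [Fintype ι] (v : ι → V) : Prop :=
  ∑ i, v i = 0 ∧ Pairwise ((¬PosProportional · ·) on v)

theorem IsEquilibrated.snoc_snoc_init {m : ℕ} {v : Fin (m + 1) → V} (hv : IsEquilibrated v)
    {x y : V} (hxy : x + y = v (last m)) (hx : ∀ i, ¬PosProportional x (v (castSucc i)))
    (hy : ∀ i, ¬PosProportional y (v (castSucc i))) (hxy' : ¬PosProportional x y) :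
    IsEquilibrated (snoc (snoc (init v) x) y : Fin (m + 2) → V) := by
  refine ⟨?_, Fin.pairwise_snoc_iff.2 ⟨Fin.pairwise_snoc_iff.2 ⟨?_, ?_⟩, ?_⟩⟩
  · simp only [sum_univ_castSucc, snoc_castSucc, snoc_last, init, add_assoc, hxy]
    rw [← sum_univ_castSucc, hv.1]
  · exact hv.2.comp_of_injective (castSucc_injective m)
  · exact fun i => ⟨posProportional_comm.not.1 (hx i), hx i⟩
  · intro i
    induction i using lastCases with
    | last => simpa [posProportional_comm (u := y)] using hxy'
    | cast i => simpa [posProportional_comm (u := y), init] using hy i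

theorem span_range_le_snoc_snoc_init {m : ℕ} {v : Fin (m + 1) → V} {x y : V}
    (hxy : x + y = v (last m)) :
    span ℝ (Set.range v) ≤ span ℝ (Set.range (snoc (snoc (init v) x) y : Fin (m + 2) → V)) := by
  refine span_le.2 (Set.range_subset_iff.2 fun i => ?_)
  induction i using lastCases with
  | last =>
    rw [← hxy]
    exact add_mem (subset_span ⟨castSucc (last m), by simp⟩) (subset_span ⟨last _, by simp⟩)
  | cast i => exact subset_span ⟨castSucc (castSucc i), by simp [init]⟩

end Equilibrated

section InnerProductSpace
variable {E : Type*} [NormedAddCommGroup E] [InnerProductSpace ℝ E]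

theorem PosProportional.sign_inner_eq {u v : E} (h : PosProportional u v) (p : E) :
    SignType.sign ⟪p, u⟫ = SignType.sign ⟪p, v⟫ := by
  obtain ⟨c, hc, rfl⟩ := h
  rw [real_inner_smul_right, sign_mul, sign_pos hc, one_mul]

theorem PosProportional.eq_of_norm_eq {x y u : E} (hx : PosProportional x u)
    (hy : PosProportional y u) (hn : ‖x‖ = ‖y‖) : x = y := by
  refine (hx.sameRay.trans hy.symm.sameRay fun hu => ?_).eq_of_norm_eq hn
  obtain ⟨c, -, rfl⟩ := hx
  simp [hu]

theorem norm_smul_add_smul_sq {w p : E} (hp : ‖p‖ = 1) (hpw : ⟪p, w⟫ = 0) (s t : ℝ) :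
    ‖s • w + t • p‖ ^ 2 = s ^ 2 * ‖w‖ ^ 2 + t ^ 2 := by
  rw [norm_add_sq_real, real_inner_smul_left, real_inner_smul_right, real_inner_comm, hpw,
    norm_smul, norm_smul, hp, Real.norm_eq_abs, Real.norm_eq_abs, mul_pow, mul_pow, sq_abs, sq_abs]
  ring

theorem inner_smul_add_smul_self {w p : E} (hp : ‖p‖ = 1) (hpw : ⟪p, w⟫ = 0) (s t : ℝ) :
    ⟪p, s • w + t • p⟫ = t := by
  rw [inner_add_right, real_inner_smul_right, real_inner_smul_right, hpw,
    real_inner_self_eq_norm_sq, hp]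
  ring

theorem exists_orthogonal_split (w : E) {a b : ℝ} (hab : ‖w‖ < a + b) (hba : |a - b| < ‖w‖) :
    ∃ γ β : ℝ, 0 < β ∧ ∀ p : E, ‖p‖ = 1 → ⟪p, w⟫ = 0 →
      ‖γ • w + β • p‖ = a ∧ ‖w - (γ • w + β • p)‖ = b := by
  set r := ‖w‖
  obtain ⟨h₁, h₂⟩ := abs_sub_lt_iff.1 hba
  have hr : 0 < r := (abs_nonneg _).trans_lt hba
  -- `α` is the projection of the side of length `a` onto `w`, by the law of cosines
  set α := (r ^ 2 + a ^ 2 - b ^ 2) / (2 * r)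
  have hα : α * (2 * r) = r ^ 2 + a ^ 2 - b ^ 2 := div_mul_cancel₀ _ (by positivity)
  have hβ : 0 < a ^ 2 - α ^ 2 := by
    have heron : (a ^ 2 - α ^ 2) * (2 * r) ^ 2 =
        (a + b - r) * (a - b + r) * (b - a + r) * (a + b + r) := by
      linear_combination (-(α * (2 * r)) - (r ^ 2 + a ^ 2 - b ^ 2)) * hα
    refine (mul_pos_iff_of_pos_right (by positivity : (0 : ℝ) < (2 * r) ^ 2)).1 (heron ▸ ?_)
    apply mul_pos (mul_pos (mul_pos _ _) _) _ <;> linarith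
  refine ⟨α / r, √(a ^ 2 - α ^ 2), Real.sqrt_pos.2 hβ, fun p hp hpw => ⟨?_, ?_⟩⟩
  · rw [← sq_eq_sq₀ (norm_nonneg _) (by linarith), norm_smul_add_smul_sq hp hpw,
      Real.sq_sqrt hβ.le, div_pow, div_mul_cancel₀ _ (by positivity)]
    ring
  · rw [show w - ((α / r) • w + √(a ^ 2 - α ^ 2) • p) =
        (1 - α / r) • w + (-√(a ^ 2 - α ^ 2)) • p by module,
      ← sq_eq_sq₀ (norm_nonneg _) (by linarith), norm_smul_add_smul_sq hp hpw, neg_sq,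
      Real.sq_sqrt hβ.le]
    have : (1 - α / r) * r = r - α := by field_simp
    linear_combination ((1 - α / r) * r + (r - α)) * this - hα

end InnerProductSpace

section Polygon

def PolygonInequality {ι : Type*} [Fintype ι] [DecidableEq ι] (a : ι → ℝ) : Prop :=
  ∀ j, a j < ∑ i ∈ univ.erase j, a i

variable {ι : Type*} [Fintype ι] [DecidableEq ι]

theorem polygonInequality_iff {a : ι → ℝ} : PolygonInequality a ↔ ∀ j, 2 * a j < ∑ i, a i := by
  refine forall_congr' fun j => ?_
  rw [← add_sum_erase _ _ (mem_univ j)]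
  constructor <;> intro <;> linarith

theorem polygonInequality_of_forall_le {a : ι → ℝ} {k : ι} (hk : ∀ j, a j ≤ a k)
    (h : a k < ∑ i ∈ univ.erase k, a i) : PolygonInequality a := by
  rw [polygonInequality_iff]
  intro j
  rw [← add_sum_erase _ _ (mem_univ k)]
  linarith [hk j]

theorem PolygonInequality.exists_merge_last {m : ℕ} (hm : 2 ≤ m) {a : Fin (m + 2) → ℝ}
    (hpos : ∀ i, 0 < a i) (ha : PolygonInequality a) :
    ∃ B, |a (castSucc (last m)) - a (last (m + 1))| < B ∧
      B < a (castSucc (last m)) + a (last (m + 1)) ∧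
      PolygonInequality (snoc (init (init a)) B : Fin (m + 1) → ℝ) := by
  set s := a (castSucc (last m))
  set t := a (last (m + 1))
  set c : Fin m → ℝ := init (init a)
  set T := ∑ i, c i
  simp only [polygonInequality_iff] at ha ⊢
  have hsum : ∑ i, a i = T + s + t := by simp [sum_univ_castSucc, T, c, s, t, init]
  have hs : 2 * s < T + s + t := hsum ▸ ha _
  have ht : 2 * t < T + s + t := hsum ▸ ha _
  have hc (i : Fin m) : 2 * c i < T + s + t := hsum ▸ ha (castSucc (castSucc i))
  have : Nonempty (Fin m) := ⟨⟨0, by omega⟩⟩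
  obtain ⟨i₀, hi₀⟩ := Finite.exists_max c
  have hcT : c i₀ < T := by
    rw [show T = c i₀ + ∑ i ∈ univ.erase i₀, c i from (add_sum_erase _ _ (mem_univ i₀)).symm,
      lt_add_iff_pos_right]
    refine sum_pos (fun i _ => hpos _) (card_pos.1 ?_)
    rw [card_erase_of_mem (mem_univ _), card_univ, Fintype.card_fin]
    omega
  obtain ⟨B, hLB, hBU⟩ := exists_between (show max |s - t| (2 * c i₀ - T) < min (s + t) T from
    have := hpos (last (m + 1)); have := hpos (castSucc (last m))
    max_lt (lt_min (abs_sub_lt_iff.2 ⟨by linarith, by linarith⟩)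
        (abs_sub_lt_iff.2 ⟨by linarith, by linarith⟩))
      (lt_min (by linarith [hc i₀]) (by linarith)))
  obtain ⟨hB₁, hB₂⟩ := max_lt_iff.1 hLB
  obtain ⟨hB₃, hB₄⟩ := lt_min_iff.1 hBU
  refine ⟨B, hB₁, hB₃, fun j => ?_⟩
  have : ∑ i, (snoc c B : Fin (m + 1) → ℝ) i = T + B := by simp [sum_univ_castSucc, T]
  rw [this]
  induction j using lastCases with
  | last => simp; linarith
  | cast i => simp; linarith [hi₀ i]

end Polygon

theorem IsEquilibrated.polygonInequality_norm {F : Type*} [NormedAddCommGroup F]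
    [NormedSpace ℝ F] [StrictConvexSpace ℝ F] {ι : Type*} [Fintype ι] [DecidableEq ι]
    {v : ι → F} (hv : IsEquilibrated v) (hv0 : ∀ i, v i ≠ 0) (hι : 3 ≤ Fintype.card ι) :
    PolygonInequality (‖v ·‖) := by
  intro j
  obtain ⟨k, hk, l, hl, hkl⟩ := one_lt_card.1 (show 1 < (univ.erase j).card by
    rw [card_erase_of_mem (mem_univ j), card_univ]; omega)
  have hl' : l ∈ (univ.erase j).erase k := mem_erase.2 ⟨hkl.symm, hl⟩
  set s := ((univ.erase j).erase k).erase l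
  have hsplit : ∑ i ∈ univ.erase j, v i = v k + v l + ∑ i ∈ s, v i := by
    rw [← add_sum_erase _ _ hk, ← add_sum_erase _ _ hl', add_assoc]
  have hsplit' : ∑ i ∈ univ.erase j, ‖v i‖ = ‖v k‖ + ‖v l‖ + ∑ i ∈ s, ‖v i‖ := by
    rw [← add_sum_erase _ _ hk, ← add_sum_erase _ _ hl', add_assoc]
  calc ‖v j‖ = ‖∑ i ∈ univ.erase j, v i‖ := by
        rw [← neg_eq_of_add_eq_zero_left ((add_sum_erase _ _ (mem_univ j)).trans hv.1), norm_neg]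
    _ ≤ ‖v k + v l‖ + ∑ i ∈ s, ‖v i‖ := by
        rw [hsplit]
        refine (norm_add_le _ _).trans ?_
        gcongr
        exact norm_sum_le _ _
    _ < ‖v k‖ + ‖v l‖ + ∑ i ∈ s, ‖v i‖ := by
        gcongr
        exact norm_add_lt_of_not_sameRay fun h => hv.2 hkl (h.posProportional (hv0 k) (hv0 l))
    _ = ∑ i ∈ univ.erase j, ‖v i‖ := by rw [hsplit']

section FiniteDimensional
variable {E : Type*} [NormedAddCommGroup E] [InnerProductSpace ℝ E] [FiniteDimensional ℝ E]

theorem infinite_setOf_norm_eq_one_inner_eq_zero (hE : 3 ≤ finrank ℝ E) (w : E) :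
    {p : E | ‖p‖ = 1 ∧ ⟪p, w⟫ = 0}.Infinite := by
  set W := (ℝ ∙ w)ᗮ
  have hW : 1 < finrank ℝ W := by
    have : finrank ℝ (ℝ ∙ w) + finrank ℝ W = finrank ℝ E := (ℝ ∙ w).finrank_add_finrank_orthogonal
    have : finrank ℝ (ℝ ∙ w) ≤ 1 := by simpa using finrank_span_le_card ({w} : Set E)
    omega
  have : Nontrivial W := Module.nontrivial_of_finrank_pos (zero_lt_one.trans hW)
  obtain ⟨u, hu⟩ := exists_norm_eq W zero_le_one
  have hsphere : (Metric.sphere (0 : W) 1).Infinite := by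
    refine (isConnected_sphere (one_lt_rank_of_one_lt_finrank hW) 0 zero_le_one).isPreconnected
      |>.infinite_of_nontrivial ⟨u, by simpa using hu, -u, by simpa using hu, fun h => ?_⟩
    have h2 : (2 : ℝ) • u = 0 := by rw [two_smul]; nth_rw 1 [h]; exact neg_add_cancel u
    simp [(smul_eq_zero.1 h2).resolve_left two_ne_zero] at hu
  refine (hsphere.image Subtype.val_injective.injOn).mono ?_
  rintro _ ⟨p, hp, rfl⟩
  refine ⟨by simpa using hp, ?_⟩
  rw [real_inner_comm]
  exact (mem_orthogonal_singleton_iff_inner_right).1 p.2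

theorem exists_norm_eq_one_mem_orthogonal {K : Submodule ℝ E} (hK : K ≠ ⊤) :
    ∃ p ∈ Kᗮ, ‖p‖ = 1 := by
  obtain ⟨u, hu, hu0⟩ := exists_mem_ne_zero_of_ne_bot ((orthogonal_eq_bot_iff).not.2 hK)
  exact ⟨‖u‖⁻¹ • u, smul_mem _ _ hu, norm_smul_inv_norm hu0⟩

theorem exists_norm_eq_one_inner_eq_zero_forall_not_posProportional (hE : 3 ≤ finrank ℝ E)
    (w : E) {ι : Type*} [Finite ι] (γ β : ι → ℝ) (hβ : ∀ k, β k ≠ 0) (u : ι → E) :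
    ∃ p : E, ‖p‖ = 1 ∧ ⟪p, w⟫ = 0 ∧ ∀ k, ¬PosProportional (γ k • w + β k • p) (u k) := by
  set C := {p : E | ‖p‖ = 1 ∧ ⟪p, w⟫ = 0}
  have hbad : ∀ k, {p ∈ C | PosProportional (γ k • w + β k • p) (u k)}.Subsingleton := by
    rintro k p ⟨⟨hp, hpw⟩, hpk⟩ q ⟨⟨hq, hqw⟩, hqk⟩
    have hn : ‖γ k • w + β k • p‖ = ‖γ k • w + β k • q‖ := by
      rw [← sq_eq_sq₀ (norm_nonneg _) (norm_nonneg _), norm_smul_add_smul_sq hp hpw,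
        norm_smul_add_smul_sq hq hqw]
    exact smul_right_injective E (hβ k) (add_left_cancel (hpk.eq_of_norm_eq hqk hn))
  obtain ⟨p, ⟨hp, hpw⟩, hpS⟩ := ((infinite_setOf_norm_eq_one_inner_eq_zero hE w).sdiff
    (Set.finite_iUnion fun k => (hbad k).finite)).nonempty
  exact ⟨p, hp, hpw, fun k hk => hpS (Set.mem_iUnion.2 ⟨k, ⟨hp, hpw⟩, hk⟩)⟩

theorem exists_split_direction (hE : 3 ≤ finrank ℝ E) {K : Submodule ℝ E} {w : E} (hw : w ∈ K)
    {ι : Type*} [Finite ι] {u : ι → E} (hu : ∀ i, u i ∈ K) (γ : ℝ) {β : ℝ} (hβ : 0 < β) :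
    ∃ p : E, ‖p‖ = 1 ∧ ⟪p, w⟫ = 0 ∧ (K ≠ ⊤ → p ∉ K) ∧
      ∀ i, ¬PosProportional (γ • w + β • p) (u i) ∧
        ¬PosProportional (w - (γ • w + β • p)) (u i) := by
  by_cases hK : K = ⊤
  · obtain ⟨p, hp, hpw, hgood⟩ := exists_norm_eq_one_inner_eq_zero_forall_not_posProportional hE
      w (Sum.elim (fun _ => γ) fun _ => 1 - γ) (Sum.elim (fun _ => β) fun _ => -β)
      (by rintro (k | k) <;> simp [hβ.ne']) (Sum.elim u u)
    refine ⟨p, hp, hpw, fun h => (h hK).elim, fun i => ⟨by simpa using hgood (.inl i), ?_⟩⟩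
    rw [show w - (γ • w + β • p) = (1 - γ) • w + (-β) • p by module]
    simpa using hgood (.inr i)
  · obtain ⟨p, hpK, hp⟩ := exists_norm_eq_one_mem_orthogonal hK
    have hpK' : ∀ v ∈ K, ⟪p, v⟫ = 0 := (mem_orthogonal' K p).1 hpK
    have hpw := hpK' w hw
    have hxp := inner_smul_add_smul_self hp hpw γ β
    refine ⟨p, hp, hpw, fun _ hpK => ?_, fun i => ⟨fun h => ?_, fun h => ?_⟩⟩
    · simp [inner_self_eq_zero.1 (hpK' p hpK)] at hp
    · simpa [hxp, hpK' _ (hu i), hβ] using h.sign_inner_eq p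
    · simpa [inner_sub_right, hpw, hxp, hpK' _ (hu i), hβ] using h.sign_inner_eq p

theorem IsEquilibrated.exists_split_last (hE : 3 ≤ finrank ℝ E) {m : ℕ} {v : Fin (m + 1) → E}
    (hv : IsEquilibrated v) {a : Fin (m + 2) → ℝ}
    (hinit : ∀ i : Fin m, ‖v (castSucc i)‖ = a (castSucc (castSucc i)))
    (hab : ‖v (last m)‖ < a (castSucc (last m)) + a (last (m + 1)))
    (hba : |a (castSucc (last m)) - a (last (m + 1))| < ‖v (last m)‖) :
    ∃ v' : Fin (m + 2) → E, (∀ i, ‖v' i‖ = a i) ∧ IsEquilibrated v' ∧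
      min (finrank ℝ (span ℝ (Set.range v)) + 1) (finrank ℝ E) ≤
        finrank ℝ (span ℝ (Set.range v')) := by
  set w := v (last m)
  set K := span ℝ (Set.range v)
  obtain ⟨γ, β, hβ, hsplit⟩ := exists_orthogonal_split w hab hba
  obtain ⟨p, hp, hpw, hpK, hgood⟩ := exists_split_direction hE (K := K) (w := w)
    (subset_span ⟨last m, rfl⟩) (u := v ∘ castSucc) (fun i => subset_span ⟨castSucc i, rfl⟩) γ hβ
  obtain ⟨hxn, hyn⟩ := hsplit p hp hpw
  have hxp := inner_smul_add_smul_self hp hpw γ β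
  set x := γ • w + β • p
  have hxy : x + (w - x) = w := add_sub_cancel x w
  set v' : Fin (m + 2) → E := snoc (snoc (init v) x) (w - x)
  have hKK' : K ≤ span ℝ (Set.range v') := span_range_le_snoc_snoc_init hxy
  have hpK' : p ∈ span ℝ (Set.range v') := by
    have hx : x ∈ span ℝ (Set.range v') := subset_span ⟨castSucc (last m), by simp [v']⟩
    have hw : w ∈ span ℝ (Set.range v') := hKK' (subset_span ⟨last m, rfl⟩)
    rw [show p = β⁻¹ • (x - γ • w) by simp [x, smul_smul, hβ.ne']]
    exact smul_mem _ _ (sub_mem hx (smul_mem _ _ hw))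
  refine ⟨v', ?_, hv.snoc_snoc_init hxy (fun i => (hgood i).1) (fun i => (hgood i).2)
    fun h => ?_, ?_⟩
  · simp [Fin.forall_fin_succ', v', init, hinit, hxn, hyn]
  · simpa [inner_sub_right, hpw, hxp, hβ] using h.sign_inner_eq p
  · by_cases hK : K = ⊤
    · rw [hK, top_le_iff] at hKK'
      rw [hKK', finrank_top]
      exact min_le_right _ _
    · have := finrank_lt_finrank_of_lt (lt_of_le_of_ne hKK' fun h => hpK hK (by rwa [h]))
      omega

theorem exists_isEquilibrated_of_polygonInequality (hE : 3 ≤ finrank ℝ E) {n : ℕ} (hn : 3 ≤ n)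
    {a : Fin n → ℝ} (hpos : ∀ i, 0 < a i) (ha : PolygonInequality a) :
    ∃ v : Fin n → E, (∀ i, ‖v i‖ = a i) ∧ IsEquilibrated v ∧
      min n (finrank ℝ E + 1) ≤ finrank ℝ (span ℝ (Set.range v)) + 1 := by
  induction n, hn using Nat.le_induction with
  | base =>
    have : Nontrivial E := Module.nontrivial_of_finrank_pos (R := ℝ) (by omega)
    obtain ⟨u, hu⟩ := exists_norm_eq E (hpos 0).le
    have hu0 : u ≠ 0 := norm_ne_zero_iff.1 (hu ▸ (hpos 0).ne')
    have h₂ : IsEquilibrated ![u, -u] := by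
      refine ⟨by simp, fun i j hij => ?_⟩
      fin_cases i <;> fin_cases j <;> simp only [onFun] at hij ⊢
      · exact (hij rfl).elim
      · exact not_posProportional_neg_self hu0
      · simpa using not_posProportional_neg_self (neg_ne_zero.2 hu0)
      · exact (hij rfl).elim
    have hrank : 0 < finrank ℝ (span ℝ (Set.range ![u, -u])) :=
      finrank_pos_iff_exists_ne_zero.2 ⟨⟨u, subset_span ⟨0, rfl⟩⟩, by simpa using hu0⟩
    simp only [polygonInequality_iff, sum_univ_three] at ha
    have := ha 0; have := ha 1; have := ha 2
    obtain ⟨v, hv, hvE, hvrank⟩ := h₂.exists_split_last hE (a := a) (by simp [hu])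
      (by simp [hu]; linarith) (by simp [hu]; refine abs_sub_lt_iff.2 ⟨?_, ?_⟩ <;> linarith)
    exact ⟨v, hv, hvE, by omega⟩
  | succ n hn ih =>
    obtain ⟨m, rfl⟩ : ∃ m, n = m + 1 := ⟨n - 1, by omega⟩
    obtain ⟨B, hB₁, hB₂, hB⟩ := ha.exists_merge_last (by omega) hpos
    have hBpos : ∀ i, 0 < (snoc (init (init a)) B : Fin (m + 1) → ℝ) i := by
      simp [Fin.forall_fin_succ', init, hpos, (abs_nonneg _).trans_lt hB₁]
    obtain ⟨v, hv, hvE, hvrank⟩ := ih hBpos hB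
    obtain ⟨v', hv', hv'E, hv'rank⟩ := hvE.exists_split_last hE (a := a) (by simp [hv, init])
      (by simpa [hv] using hB₂) (by simpa [hv] using hB₁)
    exact ⟨v', hv', hv'E, by omega⟩

theorem exists_isEquilibrated_span_eq_top (hE : 3 ≤ finrank ℝ E) {n : ℕ} (hn : finrank ℝ E < n)
    {a : Fin n → ℝ} (hpos : ∀ i, 0 < a i) (ha : PolygonInequality a) :
    ∃ v : Fin n → E, (∀ i, ‖v i‖ = a i) ∧ IsEquilibrated v ∧ span ℝ (Set.range v) = ⊤ := by
  obtain ⟨v, hv, hvE, hrank⟩ := exists_isEquilibrated_of_polygonInequality hE (by omega) hpos ha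
  refine ⟨v, hv, hvE, eq_top_of_finrank_eq (le_antisymm (finrank_le _) ?_)⟩
  omega

end FiniteDimensional

/-- **Vector form of the main theorem.**  Given `n ≥ 4` reals
`A₁ ≥ A₂ ≥ … ≥ Aₙ > 0`, there is a fully equilibrated family of vectors in `ℝ³`
with these norms (sum zero, no two positively proportional, spanning `ℝ³`)
iff `A₁ < A₂ + ⋯ + Aₙ`. -/
theorem exists_fully_equilibrated_iff (n : ℕ) (hn : 4 ≤ n) (A : Fin n → ℝ)
    (hpos : ∀ i, 0 < A i) (hsorted : Antitone A) :
    (∃ v : Fin n → EuclideanSpace ℝ (Fin 3),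
      (∀ i, ‖v i‖ = A i) ∧
      (∑ i, v i) = 0 ∧
      (∀ i j, i ≠ j → ¬ PosProportional (v i) (v j)) ∧
      Submodule.span ℝ (Set.range v) = ⊤) ↔
    A ⟨0, by omega⟩ < ∑ i ∈ Finset.univ.erase ⟨0, by omega⟩, A i := by
  constructor
  · rintro ⟨v, hv, hsum, hpair, -⟩
    have hv0 (i : Fin n) : v i ≠ 0 := norm_ne_zero_iff.1 (hv i ▸ (hpos i).ne')
    simpa [hv] using (IsEquilibrated.polygonInequality_norm ⟨hsum, hpair⟩ hv0
      (by simp; omega)) ⟨0, by omega⟩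
  · intro h
    have hA : PolygonInequality A :=
      polygonInequality_of_forall_le (fun j => hsorted (Fin.le_iff_val_le_val.2 j.val.zero_le)) h
    obtain ⟨v, hv, hvE, hspan⟩ :=
      exists_isEquilibrated_span_eq_top (E := EuclideanSpace ℝ (Fin 3)) (by simp) (by simp; omega)
        hpos hA
    exact ⟨v, hv, hvE.1, fun i j => @hvE.2 i j, hspan⟩
end

section
/- Let n ≥ 2 and let A₁ ≥ A₂ ≥ … ≥ Aₙ > 0 be real numbers. Then there exist vectors v₁, …, vₙ in ℝ² with ‖vᵢ‖ = Aᵢ for all i and v₁ + v₂ + … + vₙ = 0 if and only if A₁ ≤ A₂ + A₃ + … + Aₙ. -/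
/-!
Necessity is the triangle inequality. Conversely, every other link is at most `A₁`, so adding
them one at a time moves the running sum by at most `A₁`; hence they split into two groups with
sums `b`, `c` such that `A₁`, `b`, `c` satisfy the triangle inequalities. Lay out a triangle with
these sides in the plane `ℂ` and point every link of a group along the side of that group.
-/

open Finset Complex

theorem Finset.exists_subset_sum_mem_Icc {ι α : Type*} [AddCommGroup α] [LinearOrder α]
    [IsOrderedAddMonoid α] (s : Finset ι) (a : ι → α) {M t : α} (ha : ∀ i ∈ s, a i ≤ M)
    (htM : 0 ≤ t + M) (hts : t ≤ ∑ i ∈ s, a i) :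
    ∃ u ⊆ s, ∑ i ∈ u, a i ∈ Set.Icc t (t + M) := by
  classical
  induction s using Finset.induction_on with
  | empty => exact ⟨∅, subset_rfl, by simpa using hts, by simpa using htM⟩
  | insert x s hx ih =>
    rw [sum_insert hx] at hts
    by_cases hts' : t ≤ ∑ i ∈ s, a i
    · obtain ⟨u, hus, hu⟩ := ih (fun i hi => ha i (mem_insert_of_mem hi)) hts'
      exact ⟨u, hus.trans (subset_insert x s), hu⟩
    · refine ⟨insert x s, subset_rfl, ?_, ?_⟩
      · rwa [sum_insert hx]
      · rw [sum_insert hx, add_comm t]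
        exact add_le_add (ha x (mem_insert_self x s)) (not_le.1 hts').le

theorem norm_le_sum_erase_norm_of_sum_eq_zero {ι E : Type*} [SeminormedAddCommGroup E]
    [DecidableEq ι] {s : Finset ι} {v : ι → E} (hv : ∑ i ∈ s, v i = 0) {i₀ : ι} (hi₀ : i₀ ∈ s) :
    ‖v i₀‖ ≤ ∑ i ∈ s.erase i₀, ‖v i‖ := by
  have : v i₀ = -∑ i ∈ s.erase i₀, v i :=
    eq_neg_of_add_eq_zero_left (by rw [add_sum_erase s v hi₀, hv])
  rw [this, norm_neg]
  exact norm_sum_le _ _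

theorem Complex.exists_norm_eq_norm_add_eq {a b c : ℝ} (ha : 0 ≤ a) (hb : 0 ≤ b)
    (hab : a ≤ b + c) (hbc : b ≤ a + c) (hca : c ≤ a + b) :
    ∃ z : ℂ, ‖z‖ = b ∧ ‖(a : ℂ) + z‖ = c := by
  rcases ha.eq_or_lt with rfl | ha
  · obtain rfl : b = c := by linarith
    exact ⟨b, by simp [hb], by simp [hb]⟩
  -- `p = b cos γ`, where `γ` is the angle opposite to `c` (law of cosines)
  set p := (c ^ 2 - a ^ 2 - b ^ 2) / (2 * a)
  have h2a : 0 < 2 * a := by positivity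
  have hp : p ^ 2 ≤ b ^ 2 := by
    apply sq_le_sq'
    · rw [le_div_iff₀ h2a]; nlinarith
    · rw [div_le_iff₀ h2a]; nlinarith
  have hcos : a ^ 2 + 2 * a * p + b ^ 2 = c ^ 2 := by simp only [p]; field_simp; ring
  refine ⟨⟨p, √(b ^ 2 - p ^ 2)⟩, ?_, ?_⟩
  · rw [norm_eq_sqrt_sq_add_sq, Real.sq_sqrt (by linarith)]
    simpa using Real.sqrt_sq hb
  · have hc : 0 ≤ c := by nlinarith
    rw [norm_eq_sqrt_sq_add_sq]
    simp only [add_re, ofReal_re, add_im, ofReal_im, zero_add]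
    rw [Real.sq_sqrt (by linarith), ← Real.sqrt_sq hc, ← hcos]
    ring_nf

theorem Complex.exists_closed_polygon_of_le_sum_erase {ι : Type*} [Fintype ι] [DecidableEq ι]
    (a : ι → ℝ) (ha : ∀ i, 0 ≤ a i) (i₀ : ι) (hmax : ∀ i, a i ≤ a i₀)
    (h : a i₀ ≤ ∑ i ∈ univ.erase i₀, a i) :
    ∃ v : ι → ℂ, (∀ i, ‖v i‖ = a i) ∧ ∑ i, v i = 0 := by
  set s := univ.erase i₀
  obtain ⟨u, hus, hlo, hhi⟩ := s.exists_subset_sum_mem_Icc a (fun i _ => hmax i)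
    (t := (∑ i ∈ s, a i - a i₀) / 2) (by linarith [ha i₀]) (by linarith [ha i₀])
  have hsplit := sum_sdiff hus (f := a)
  obtain ⟨z, hz, hw⟩ := exists_norm_eq_norm_add_eq (ha i₀) (sum_nonneg fun i _ => ha i)
    (b := ∑ i ∈ u, a i) (c := ∑ i ∈ s \ u, a i) (by linarith) (by linarith) (by linarith)
  set w := -((a i₀ : ℂ) + z)
  let θ : ι → ℝ := fun i => if i = i₀ then 0 else if i ∈ u then arg z else arg w
  have hθu : ∀ i ∈ u, θ i = arg z := fun i hi => by
    simp [θ, hi, ne_of_mem_erase (hus hi)]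
  have hθw : ∀ i ∈ s \ u, θ i = arg w := fun i hi => by
    simp [θ, (mem_sdiff.1 hi).2, ne_of_mem_erase (mem_sdiff.1 hi).1]
  refine ⟨fun i => a i * exp (θ i * I), fun i => by simp [abs_of_nonneg (ha i)], ?_⟩
  calc ∑ i, (a i : ℂ) * exp (θ i * I)
      = a i₀ + ∑ i ∈ u, (a i : ℂ) * exp (θ i * I) + ∑ i ∈ s \ u, (a i : ℂ) * exp (θ i * I) := by
        rw [← add_sum_erase _ _ (mem_univ i₀), ← sum_sdiff hus]
        simp only [↓reduceIte, ofReal_zero, zero_mul, exp_zero, mul_one, θ]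
        ring
    _ = a i₀ + ‖z‖ * exp (arg z * I) + ‖w‖ * exp (arg w * I) := by
        rw [sum_congr rfl fun i hi => congrArg (fun x : ℝ => (a i : ℂ) * exp (x * I)) (hθu i hi),
          sum_congr rfl fun i hi => congrArg (fun x : ℝ => (a i : ℂ) * exp (x * I)) (hθw i hi),
          ← sum_mul, ← sum_mul, norm_neg, hz, hw]
        push_cast
        rfl
    _ = 0 := by
        rw [norm_mul_exp_arg_mul_I, norm_mul_exp_arg_mul_I]
        ring

/-- **Closure criterion for a robot arm.**  Given `n ≥ 2` reals
`A₁ ≥ A₂ ≥ ⋯ ≥ Aₙ > 0`, there exist vectors in `ℝ²` with these norms summing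
to zero iff the largest, `A₁`, is at most the sum of the others. -/
theorem exists_closed_chain_iff (n : ℕ) (hn : 2 ≤ n) (A : Fin n → ℝ)
    (hpos : ∀ i, 0 < A i) (hsorted : Antitone A) :
    (∃ v : Fin n → EuclideanSpace ℝ (Fin 2),
      (∀ i, ‖v i‖ = A i) ∧ (∑ i, v i) = 0) ↔
    A ⟨0, by omega⟩ ≤ ∑ i ∈ Finset.univ.erase ⟨0, by omega⟩, A i := by
  constructor
  · rintro ⟨v, hv, hsum⟩
    simpa only [hv] using norm_le_sum_erase_norm_of_sum_eq_zero hsum (mem_univ _)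
  · intro h
    obtain ⟨v, hv, hsum⟩ := exists_closed_polygon_of_le_sum_erase A (fun i => (hpos i).le) _
      (fun i => hsorted (Fin.le_def.2 (Nat.zero_le _))) h
    let e := Complex.orthonormalBasisOneI.repr
    exact ⟨fun i => e (v i), fun i => by simp [hv], by rw [← map_sum, hsum, map_zero]⟩
end

section
/- Let n ≥ 3 and let A₁ ≥ A₂ ≥ … ≥ Aₙ > 0 be real numbers with A₁ < A₂ + … + Aₙ. Then there exist vectors v₁, …, vₙ in ℝ² with ‖vᵢ‖ = Aᵢ for all i, with v₁ + … + vₙ = 0, and such that no two of the vectors are positively proportional (no vᵢ equals c • vⱼ for c > 0 and i ≠ j). -/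
open Real Finset Function
open scoped Complex

theorem PosProportional.map {V W : Type*} [AddCommGroup V] [Module ℝ V] [AddCommGroup W]
    [Module ℝ W] (f : V →ₗ[ℝ] W) {u v : V} (h : PosProportional u v) :
    PosProportional (f u) (f v) := by
  obtain ⟨c, hc, rfl⟩ := h
  exact ⟨c, hc, map_smul f c v⟩

theorem eq_of_posProportional_smul {E : Type*} [NormedAddCommGroup E] [NormedSpace ℝ E]
    {r s : ℝ} {u w : E} (hr : 0 < r) (hs : 0 ≤ s) (hu : ‖u‖ = 1) (hw : ‖w‖ = 1)
    (h : PosProportional (r • u) (s • w)) : u = w := by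
  obtain ⟨c, hc, huw⟩ := h
  have hrs : r = c * s := by
    simpa [norm_smul, hu, hw, abs_of_pos hr, abs_of_pos hc, abs_of_nonneg hs] using
      congrArg norm huw
  rw [smul_smul, ← hrs] at huw
  exact smul_right_injective E hr.ne' huw

theorem exp_mul_I_add_two_mul_sub (θ β : ℝ) :
    cexp (↑(θ + 2 * β) * Complex.I) - cexp (↑θ * Complex.I) =
      2 * Complex.I * ↑(sin β) * cexp (↑(θ + β) * Complex.I) := by
  have h : 2 * Complex.I * ↑(sin β) = cexp (β * Complex.I) - cexp (-β * Complex.I) := by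
    rw [Complex.ofReal_sin, Complex.sin]
    ring_nf
    rw [Complex.I_sq]
    ring
  rw [h, sub_mul, ← Complex.exp_add, ← Complex.exp_add]
  push_cast
  ring_nf

section InscribedPolygon

variable (b : ℕ → ℝ)

theorem sum_range_sin_smul_exp_eq_zero {n : ℕ} (hsum : ∑ k ∈ range n, b k = π) :
    ∑ k ∈ range n, sin (b k) • cexp (↑(2 * ∑ j ∈ range k, b j + b k) * Complex.I) = 0 := by
  set vertex : ℕ → ℂ := fun k => cexp (↑(2 * ∑ j ∈ range k, b j) * Complex.I)
  have hchord : ∀ k, sin (b k) • cexp (↑(2 * ∑ j ∈ range k, b j + b k) * Complex.I) =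
      (2 * Complex.I)⁻¹ * (vertex (k + 1) - vertex k) := by
    intro k
    simp only [vertex, sum_range_succ, mul_add, exp_mul_I_add_two_mul_sub, Complex.real_smul]
    field_simp
  rw [sum_congr rfl fun k _ => hchord k, ← mul_sum, sum_range_sub]
  simp only [vertex, hsum, sum_range_zero, mul_zero, Complex.ofReal_zero, zero_mul,
    Complex.exp_zero]
  push_cast
  rw [Complex.exp_two_pi_mul_I, sub_self, mul_zero]

theorem two_mul_sum_range_add_lt {n k l : ℕ} (hb : ∀ k < n, 0 < b k) (hkl : k < l) (hl : l ≤ n) :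
    2 * ∑ j ∈ range k, b j + b k < 2 * ∑ j ∈ range l, b j := by
  have hsub : ∑ j ∈ range (k + 1), b j ≤ ∑ j ∈ range l, b j :=
    sum_le_sum_of_subset_of_nonneg (range_subset_range.2 hkl) fun j hj _ =>
      (hb j ((mem_range.1 hj).trans_le hl)).le
  rw [sum_range_succ] at hsub
  linarith [hb k (hkl.trans_le hl)]

end InscribedPolygon

theorem exists_injective_circle_sum_sin_smul_eq_zero {n : ℕ} (β : Fin n → ℝ)
    (hβ : ∀ i, 0 < β i) (hsum : ∑ i, β i = π) :
    ∃ u : Fin n → Circle, Injective u ∧ ∑ i, sin (β i) • (u i : ℂ) = 0 := by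
  set b : ℕ → ℝ := fun k => if h : k < n then β ⟨k, h⟩ else 0
  have hb : ∀ i : Fin n, b i = β i := fun i => dif_pos i.isLt
  have hb_pos : ∀ k < n, 0 < b k := fun k hk => hb ⟨k, hk⟩ ▸ hβ _
  have hb_sum : ∑ k ∈ range n, b k = π := by
    rw [← Fin.sum_univ_eq_sum_range]
    simpa only [hb] using hsum
  set μ : ℕ → ℝ := fun k => 2 * ∑ j ∈ range k, b j + b k
  have hμ_mono : StrictMono fun i : Fin n => μ i := fun i j hij =>
    (two_mul_sum_range_add_lt b hb_pos hij j.isLt.le).trans_le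
      (le_add_of_nonneg_right (hb_pos j j.isLt).le)
  have hμ_mem : ∀ i : Fin n, μ i ∈ Set.Ico 0 (2 * π) := fun i =>
    ⟨add_nonneg (mul_nonneg zero_le_two (sum_nonneg fun j hj =>
        (hb_pos j ((mem_range.1 hj).trans i.isLt)).le)) (hb_pos i i.isLt).le,
      by simpa [hb_sum] using two_mul_sum_range_add_lt b hb_pos i.isLt le_rfl⟩
  refine ⟨fun i => Circle.exp (μ i), fun i j hij => hμ_mono.injective ?_, ?_⟩
  · exact Circle.exp_injOn_Ico (by linarith) (hμ_mem i) (hμ_mem j) hij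
  · have := sum_range_sin_smul_exp_eq_zero b hb_sum
    rw [← Fin.sum_univ_eq_sum_range] at this
    simpa only [Circle.coe_exp, μ, hb] using this

theorem exists_equilibrated_of_half_angles {n : ℕ} (A : Fin n → ℝ) (hpos : ∀ i, 0 < A i)
    {x : ℝ} (hx : x ≠ 0) (β : Fin n → ℝ) (hβ : ∀ i, 0 < β i) (hsin : ∀ i, sin (β i) = A i * x)
    (hsum : ∑ i, β i = π) :
    ∃ v : Fin n → EuclideanSpace ℝ (Fin 2),
      (∀ i, ‖v i‖ = A i) ∧ (∑ i, v i) = 0 ∧ (∀ i j, i ≠ j → ¬ PosProportional (v i) (v j)) := by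
  obtain ⟨u, hu, hu_sum⟩ := exists_injective_circle_sum_sin_smul_eq_zero β hβ hsum
  let L := Complex.orthonormalBasisOneI.repr
  have hA : ∀ i, A i = x⁻¹ * sin (β i) := fun i => by rw [hsin]; field_simp
  refine ⟨fun i => L (A i • (u i : ℂ)), fun i => ?_, ?_, fun i j hij h => hij (hu ?_)⟩
  · simp [Circle.norm_coe, abs_of_pos (hpos i)]
  · rw [← map_sum]
    simp_rw [hA, mul_smul, ← smul_sum, hu_sum, smul_zero, map_zero]
  · exact Subtype.ext (eq_of_posProportional_smul (hpos i) (hpos j).le (Circle.norm_coe _)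
      (Circle.norm_coe _) (by simpa using h.map L.symm.toLinearMap))

theorem mul_mem_Icc_zero_one {a b x : ℝ} (hb : 0 ≤ b) (hba : b ≤ a) (hx : x ∈ Set.Icc 0 a⁻¹) :
    b * x ∈ Set.Icc (0 : ℝ) 1 :=
  ⟨mul_nonneg hb hx.1, (mul_le_mul hba hx.2 hx.1 (hb.trans hba)).trans mul_inv_le_one⟩

theorem hasDerivAt_arcsin_const_mul_zero (c : ℝ) : HasDerivAt (fun x => arcsin (c * x)) c 0 := by
  have := (hasDerivAt_arcsin (x := c * 0) (by norm_num) (by norm_num)).comp 0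
    ((hasDerivAt_id (0 : ℝ)).const_mul c)
  simp only [mul_zero, ne_eq, OfNat.ofNat_ne_zero, not_false_eq_true, zero_pow, sub_zero,
    sqrt_one, div_one, mul_one, one_mul] at this
  exact this

theorem exists_mem_Ioo_pos_of_hasDerivAt {f : ℝ → ℝ} {f' ε : ℝ} (hf : HasDerivAt f f' 0)
    (hf' : 0 < f') (h0 : f 0 = 0) (hε : 0 < ε) : ∃ x ∈ Set.Ioo 0 ε, 0 < f x := by
  have hsign := eventually_nhdsWithin_sign_eq_of_deriv_pos (hf.deriv ▸ hf') h0
  obtain ⟨x, hsx, hx⟩ := ((hsign.filter_mono nhdsWithin_le_nhds).and (Ioo_mem_nhdsGT hε)).exists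
  rw [sub_zero, sign_pos hx.1, sign_eq_one_iff] at hsx
  exact ⟨x, hx, hsx⟩

theorem exists_sum_arcsin_eq_pi {ι : Type*} [Fintype ι] (A : ι → ℝ) {a : ℝ} (ha : 0 ≤ a)
    (hc : π ≤ ∑ i, arcsin (A i * a⁻¹)) : ∃ x ∈ Set.Ioc 0 a⁻¹, ∑ i, arcsin (A i * x) = π := by
  have hF : Continuous fun x => ∑ i, arcsin (A i * x) := by fun_prop
  obtain ⟨x, hx, hFx⟩ :=
    intermediate_value_Icc (inv_nonneg.2 ha) hF.continuousOn ⟨by simp [pi_pos.le], hc⟩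
  refine ⟨x, ⟨hx.1.lt_of_ne ?_, hx.2⟩, hFx⟩
  rintro rfl
  simp only [mul_zero, arcsin_zero, sum_const_zero] at hFx
  exact pi_ne_zero hFx.symm

theorem exists_sum_erase_arcsin_eq_arcsin {ι : Type*} [Fintype ι] [DecidableEq ι] (A : ι → ℝ)
    {i₀ : ι} (h₀ : 0 < A i₀) (hlt : A i₀ < ∑ i ∈ univ.erase i₀, A i)
    (hc : ∑ i, arcsin (A i * (A i₀)⁻¹) < π) :
    ∃ x ∈ Set.Ioc 0 (A i₀)⁻¹, ∑ i ∈ univ.erase i₀, arcsin (A i * x) = arcsin (A i₀ * x) := by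
  set G : ℝ → ℝ := fun x => ∑ i ∈ univ.erase i₀, arcsin (A i * x) - arcsin (A i₀ * x)
  have hG : Continuous G := by fun_prop
  have hG' : HasDerivAt G (∑ i ∈ univ.erase i₀, A i - A i₀) 0 :=
    (HasDerivAt.fun_sum fun i _ => hasDerivAt_arcsin_const_mul_zero (A i)).fun_sub
      (hasDerivAt_arcsin_const_mul_zero _)
  obtain ⟨x₀, hx₀, hGx₀⟩ :=
    exists_mem_Ioo_pos_of_hasDerivAt hG' (sub_pos.2 hlt) (by simp [G]) (inv_pos.2 h₀)
  have hG_end : G (A i₀)⁻¹ < 0 := by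
    rw [← add_sum_erase _ _ (mem_univ i₀), mul_inv_cancel₀ h₀.ne', arcsin_one] at hc
    simp only [G, mul_inv_cancel₀ h₀.ne', arcsin_one]
    linarith
  obtain ⟨x, hx, hGx⟩ := intermediate_value_Icc' hx₀.2.le hG.continuousOn ⟨hG_end.le, hGx₀.le⟩
  exact ⟨x, ⟨hx₀.1.trans_le hx.1, hx.2⟩, sub_eq_zero.1 hGx⟩

theorem exists_half_angles {ι : Type*} [Fintype ι] [DecidableEq ι] (A : ι → ℝ) (i₀ : ι)
    (hpos : ∀ i, 0 < A i) (hmax : ∀ i, A i ≤ A i₀) (hlt : A i₀ < ∑ i ∈ univ.erase i₀, A i) :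
    ∃ x > 0, ∃ β : ι → ℝ, (∀ i, 0 < β i) ∧ (∀ i, sin (β i) = A i * x) ∧ ∑ i, β i = π := by
  have hsin : ∀ x ∈ Set.Ioc 0 (A i₀)⁻¹, ∀ i, sin (arcsin (A i * x)) = A i * x := fun x hx i =>
    sin_arcsin' (Set.Icc_subset_Icc_left (by norm_num)
      (mul_mem_Icc_zero_one (hpos i).le (hmax i) (Set.Ioc_subset_Icc_self hx)))
  have harcsin : ∀ x ∈ Set.Ioc 0 (A i₀)⁻¹, ∀ i, 0 < arcsin (A i * x) := fun x hx i =>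
    arcsin_pos.2 (mul_pos (hpos i) hx.1)
  rcases le_or_gt π (∑ i, arcsin (A i * (A i₀)⁻¹)) with hc | hc
  · obtain ⟨x, hx, hsum⟩ := exists_sum_arcsin_eq_pi A (hpos i₀).le hc
    exact ⟨x, hx.1, _, harcsin x hx, hsin x hx, hsum⟩
  · obtain ⟨x, hx, hsum⟩ := exists_sum_erase_arcsin_eq_arcsin A (hpos i₀) hlt hc
    refine ⟨x, hx.1, update (fun i => arcsin (A i * x)) i₀ (π - arcsin (A i₀ * x)),
      fun i => ?_, fun i => ?_, ?_⟩
    · rcases eq_or_ne i i₀ with rfl | hi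
      · simp only [update_self]
        linarith [arcsin_le_pi_div_two (A i * x), pi_pos]
      · simp [hi, harcsin x hx i]
    · rcases eq_or_ne i i₀ with rfl | hi
      · simp [sin_pi_sub, hsin x hx]
      · simp [hi, hsin x hx]
    · rw [sum_update_of_mem (mem_univ _), sdiff_singleton_eq_erase, hsum]
      ring

/-- **Edge vectors of a convex cyclic polygon.**  Given `n ≥ 3` reals
`A₁ ≥ ⋯ ≥ Aₙ > 0` with `A₁ < A₂ + ⋯ + Aₙ`, there exist vectors in `ℝ²` with
these norms summing to zero with no two of them positively proportional. -/
theorem exists_equilibrated_planar (n : ℕ) (hn : 3 ≤ n) (A : Fin n → ℝ)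
    (hpos : ∀ i, 0 < A i) (hsorted : Antitone A)
    (hlt : A ⟨0, by omega⟩ < ∑ i ∈ Finset.univ.erase ⟨0, by omega⟩, A i) :
    ∃ v : Fin n → EuclideanSpace ℝ (Fin 2),
      (∀ i, ‖v i‖ = A i) ∧
      (∑ i, v i) = 0 ∧
      (∀ i j, i ≠ j → ¬ PosProportional (v i) (v j)) := by
  obtain ⟨x, hx, β, hβ, hsin, hsum⟩ :=
    exists_half_angles A _ hpos (fun i => hsorted (Nat.zero_le i.val)) hlt
  exact exists_equilibrated_of_half_angles A hpos hx.ne' β hβ hsin hsum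
end

section
/- Let n ≥ 1 and let A₁ ≥ A₂ ≥ … ≥ Aₙ > 0 be real numbers. Then there is at most one real number R ≥ A₁/2 satisfying ∑ᵢ 2 · arcsin(Aᵢ / (2R)) = 2π. Moreover, if ∑ᵢ 2 · arcsin(Aᵢ / A₁) ≥ 2π, then there exists exactly one such R. -/
/-!
A chord of length `a` in a circle of radius `R ≥ a / 2` subtends the central angle
`2 arcsin (a / (2R))`, which strictly decreases in `R`. So the total central angle is strictly
decreasing on `[A₁/2, ∞)`, which gives uniqueness. It is continuous there, and by Jordan's
inequality `arcsin y ≤ π y / 2` it drops below `2π` for large `R`; when it is at least `2π` at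
`R = A₁/2`, the intermediate value theorem gives existence.
-/

open Real Set

namespace Real

theorem arcsin_le_pi_div_two_mul {y : ℝ} (h₀ : 0 ≤ y) (h₁ : y ≤ 1) : arcsin y ≤ π / 2 * y := by
  have hpi := pi_pos
  rw [arcsin_le_iff_le_sin ⟨by linarith, h₁⟩ ⟨by nlinarith, by nlinarith⟩]
  exact le_sin_mul h₀ h₁

end Real

section CentralAngle

variable {ι : Type*} [Fintype ι]

noncomputable def centralAngleSum (a : ι → ℝ) (R : ℝ) : ℝ :=
  ∑ i, 2 * arcsin (a i / (2 * R))

theorem strictAntiOn_arcsin_chord {a c : ℝ} (ha : 0 < a) (hac : a ≤ c) :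
    StrictAntiOn (fun R => arcsin (a / (2 * R))) (Ici (c / 2)) := by
  intro R₁ (hcR₁ : c / 2 ≤ R₁) R₂ _ h₁₂
  have hR₁ : 0 < R₁ := by linarith
  have hlt : a / (2 * R₂) < a / (2 * R₁) := by gcongr
  refine arcsin_lt_arcsin (by linarith [div_pos ha (by linarith : (0 : ℝ) < 2 * R₂)]) hlt ?_
  rw [div_le_one (by positivity)]
  linarith

theorem centralAngleSum_strictAntiOn [Nonempty ι] {a : ι → ℝ} {c : ℝ} (hpos : ∀ i, 0 < a i)
    (hle : ∀ i, a i ≤ c) : StrictAntiOn (centralAngleSum a) (Ici (c / 2)) :=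
  fun _ h₁ _ h₂ h₁₂ => Finset.sum_lt_sum_of_nonempty Finset.univ_nonempty fun i _ => by
    have := strictAntiOn_arcsin_chord (hpos i) (hle i) h₁ h₂ h₁₂
    simp only at this
    linarith

theorem continuousOn_centralAngleSum (a : ι → ℝ) : ContinuousOn (centralAngleSum a) (Ioi 0) :=
  continuousOn_finsetSum _ fun i _ =>
    (continuous_const.mul continuous_arcsin).comp_continuousOn <|
      continuousOn_const.div (by fun_prop) fun R hR => by simp only [mem_Ioi] at hR; positivity

theorem centralAngleSum_le {a : ι → ℝ} {R : ℝ} (hnonneg : ∀ i, 0 ≤ a i)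
    (hle : ∀ i, a i ≤ 2 * R) : centralAngleSum a R ≤ π * (∑ i, a i) / (2 * R) := by
  have hpi := pi_pos
  calc centralAngleSum a R ≤ ∑ i, π * (a i / (2 * R)) := Finset.sum_le_sum fun i _ => by
        have h₀ : 0 ≤ a i / (2 * R) := div_nonneg (hnonneg i) ((hnonneg i).trans (hle i))
        have h₁ : a i / (2 * R) ≤ 1 := div_le_one_of_le₀ (hle i) ((hnonneg i).trans (hle i))
        linarith [arcsin_le_pi_div_two_mul h₀ h₁]
    _ = π * (∑ i, a i) / (2 * R) := by rw [← Finset.mul_sum, ← Finset.sum_div, mul_div_assoc]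

theorem exists_centralAngleSum_eq [Nonempty ι] {a : ι → ℝ} {c : ℝ} (hpos : ∀ i, 0 < a i)
    (hle : ∀ i, a i ≤ c) (hbig : 2 * π ≤ ∑ i, 2 * arcsin (a i / c)) :
    ∃ R, c / 2 ≤ R ∧ centralAngleSum a R = 2 * π := by
  have hc : 0 < c := (hpos (Classical.arbitrary ι)).trans_le (hle _)
  set M := max (c / 2) ((∑ i, a i) / 4)
  have hcM : c / 2 ≤ M := le_max_left _ _
  have hM : 0 < M := by linarith
  have hsmall : centralAngleSum a M ≤ 2 * π := by
    refine (centralAngleSum_le (fun i => (hpos i).le) fun i => by linarith [hle i]).trans ?_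
    rw [div_le_iff₀ (by positivity)]
    nlinarith [pi_pos, le_max_right (c / 2) ((∑ i, a i) / 4)]
  have hlarge : 2 * π ≤ centralAngleSum a (c / 2) := by
    simpa only [centralAngleSum, mul_div_cancel₀ c two_ne_zero] using hbig
  obtain ⟨R, hR, hfR⟩ := intermediate_value_Icc' hcM
    ((continuousOn_centralAngleSum a).mono fun R hR => (half_pos hc).trans_le hR.1)
    ⟨hsmall, hlarge⟩
  exact ⟨R, hR.1, hfR⟩

end CentralAngle

/-- **Uniqueness of the closing radius (paper's equation (1)).**
Given `n ≥ 1` reals `A₁ ≥ ⋯ ≥ Aₙ > 0`, there is at most one `R ≥ A₁/2` with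
`∑ᵢ 2 arcsin(Aᵢ/(2R)) = 2π`; and if `∑ᵢ 2 arcsin(Aᵢ/A₁) ≥ 2π`, then exactly
one such `R` exists. -/
theorem closing_radius_unique (n : ℕ) (hn : 1 ≤ n) (A : Fin n → ℝ)
    (hpos : ∀ i, 0 < A i) (hsorted : Antitone A) :
    (∀ R₁ R₂ : ℝ, A ⟨0, by omega⟩ / 2 ≤ R₁ → A ⟨0, by omega⟩ / 2 ≤ R₂ →
      (∑ i, 2 * arcsin (A i / (2 * R₁))) = 2 * π →
      (∑ i, 2 * arcsin (A i / (2 * R₂))) = 2 * π → R₁ = R₂) ∧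
    (2 * π ≤ (∑ i, 2 * arcsin (A i / A ⟨0, by omega⟩)) →
      ∃! R : ℝ, A ⟨0, by omega⟩ / 2 ≤ R ∧
        (∑ i, 2 * arcsin (A i / (2 * R))) = 2 * π) := by
  have : Nonempty (Fin n) := ⟨⟨0, by omega⟩⟩
  have hle : ∀ i, A i ≤ A ⟨0, by omega⟩ := fun i => hsorted (Nat.zero_le i.val)
  have hanti := centralAngleSum_strictAntiOn hpos hle
  refine ⟨fun R₁ R₂ h₁ h₂ e₁ e₂ => hanti.injOn h₁ h₂ (e₁.trans e₂.symm), fun hbig => ?_⟩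
  obtain ⟨R, hR, hfR⟩ := exists_centralAngleSum_eq hpos hle hbig
  exact ⟨R, ⟨hR, hfR⟩, fun R' hR' => hanti.injOn hR'.1 hR (hR'.2.trans hfR.symm)⟩
end
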